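/- Let π be a permutation of [n] with a simple alignment (i, j) where i = π(1), j = π(n), and let π' coincide with π except π'(1) = j, π'(n) = i. Then the set of alignments of π' equals the set of alignments of π with the single alignment (i, j) removed. -/

import Mathlib

/-!
Passing from `π` to `π * swap 1 0` only moves the preimages of `i = π 1` and `j = π 0` across
the boundary between the cyclically adjacent positions `0` and `1`. Moving a base point, or an
end point, one step across this boundary shifts cyclic positions uniformly by one, so an
alignment can only be affected when one of its four points sits on the boundary. Since
`1, i, j, 0` occur in this cyclic order, `i` and `j` avoid position `1`, and every such
boundary case turns out to be invariant except `(i, j)` itself, which would now need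
`i, j` strictly between `0` and `1`.
-/

open Finset

variable {n : ℕ}

/-- Position of `x` in the cyclic order on `Fin n` starting at `i`. -/
def cpos (i x : Fin n) : ℕ := ((x - i : Fin n) : ℕ)

/-- `X ≪_i Y`: every element of `X \\ Y` precedes every element of `Y \\ X`
in the cyclic order starting at `i`. -/
def Ll (i : Fin n) (X Y : Finset (Fin n)) : Prop :=
  ∀ x ∈ X \ Y, ∀ y ∈ Y \ X, cpos i x < cpos i y

/-- `X` and `Y` are weakly separated. -/
def WSep (X Y : Finset (Fin n)) : Prop := ∃ i : Fin n, Ll i X Y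

/-- `(i, j)` is an alignment of `π`: the quadruple `π⁻¹(i), i, j, π⁻¹(j)`
occurs in this cyclic order (`j = π(j)` allowed, `i = π(i)` not). -/
def IsAlignment (π : Equiv.Perm (Fin n)) (i j : Fin n) : Prop :=
  0 < cpos (π.symm i) i ∧
  cpos (π.symm i) i < cpos (π.symm i) j ∧
  cpos (π.symm i) j ≤ cpos (π.symm i) (π.symm j)

theorem Fin.val_add_one_of_add_one_ne_zero [NeZero n] {y : Fin n} (hy : y + 1 ≠ 0) :
    ((y + 1 : Fin n) : ℕ) = y + 1 := by
  obtain ⟨m, rfl⟩ := Nat.exists_eq_succ_of_ne_zero (NeZero.ne n)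
  rw [Fin.val_add_one, if_neg]
  rintro rfl
  exact hy (Fin.last_add_one m)

theorem cpos_lt (a x : Fin n) : cpos a x < n :=
  Fin.isLt _

section

variable [NeZero n]

theorem cpos_self (a : Fin n) : cpos a a = 0 := by
  simp [cpos]

theorem cpos_injective (a : Fin n) : Function.Injective (cpos a) := fun _ _ h =>
  sub_left_injective (Fin.ext h)

theorem cpos_add_one_self (u : Fin n) : cpos (u + 1) u = n - 1 := by
  obtain ⟨m, rfl⟩ := Nat.exists_eq_succ_of_ne_zero (NeZero.ne n)
  rw [cpos, sub_add_cancel_left, Fin.coe_neg_one, Nat.succ_sub_one]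

theorem cpos_add_one_left {u x : Fin n} (hx : x ≠ u) : cpos (u + 1) x + 1 = cpos u x := by
  rw [cpos, cpos, ← Fin.val_add_one_of_add_one_ne_zero] <;>
    rw [sub_add_eq_sub_sub, sub_add_cancel]
  exact sub_ne_zero.mpr hx

theorem cpos_add_one_right {a u : Fin n} (hu : u + 1 ≠ a) : cpos a (u + 1) = cpos a u + 1 := by
  rw [cpos, cpos, ← Fin.val_add_one_of_add_one_ne_zero] <;> rw [sub_add_eq_add_sub]
  exact sub_ne_zero.mpr hu

theorem cpos_self_add_one_le_one (u : Fin n) : cpos u (u + 1) ≤ 1 := by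
  rw [cpos, add_sub_cancel_left, Fin.val_one']
  exact Nat.mod_le 1 n

end

def Aligned (a k l b : Fin n) : Prop :=
  0 < cpos a k ∧ cpos a k < cpos a l ∧ cpos a l ≤ cpos a b

theorem isAlignment_iff_aligned (π : Equiv.Perm (Fin n)) (k l : Fin n) :
    IsAlignment π k l ↔ Aligned (π.symm k) k l (π.symm l) :=
  Iff.rfl

theorem Aligned.not_aligned_swap {a b k l : Fin n} (h : Aligned a k l b) (b' : Fin n) :
    ¬Aligned a l k b' :=
  fun h' => h.2.1.not_gt h'.2.1

section

variable [NeZero n] {a b k l : Fin n}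

theorem Aligned.left_ne (h : Aligned a k l b) : k ≠ a := by
  rintro rfl
  exact h.1.ne' (cpos_self k)

theorem Aligned.right_ne (h : Aligned a k l b) : l ≠ a := by
  rintro rfl
  exact Nat.not_lt_zero _ (cpos_self l ▸ h.2.1)

theorem not_aligned_self (a k l : Fin n) : ¬Aligned a k l a := by
  rintro ⟨hk, hkl, hl⟩
  rw [cpos_self] at hl
  omega

theorem not_aligned_add_one (u k l : Fin n) : ¬Aligned u k l (u + 1) := by
  rintro ⟨hk, hkl, hl⟩
  have := cpos_self_add_one_le_one u
  omega

theorem aligned_add_one_left_iff {u : Fin n} (hk : k ≠ u + 1) (hb : b ≠ u) :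
    Aligned (u + 1) k l b ↔ Aligned u k l b := by
  have hb' := cpos_add_one_left hb
  have hbn := cpos_lt u b
  rcases eq_or_ne k u with rfl | hku
  · have := cpos_lt (k + 1) l
    simp only [Aligned, cpos_self, cpos_add_one_self, lt_irrefl, false_and, iff_false]
    omega
  have hk' := cpos_add_one_left hku
  have hk0 : cpos (u + 1) k ≠ 0 := by
    rw [← cpos_self (u + 1)]; exact (cpos_injective _).ne hk
  rcases eq_or_ne l u with rfl | hlu
  · simp only [Aligned, cpos_self, cpos_add_one_self, Nat.not_lt_zero, false_and, and_false,
      iff_false]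
    omega
  have hl' := cpos_add_one_left hlu
  simp only [Aligned]
  omega

theorem aligned_add_one_right_iff {u : Fin n} (ha : u + 1 ≠ a) (hl : l ≠ u + 1) :
    Aligned a k l (u + 1) ↔ Aligned a k l u := by
  have hu := cpos_add_one_right ha
  have hl' := (cpos_injective a).ne hl
  simp only [Aligned]
  omega

end

theorem isAlignment_mul_swap_iff [NeZero n] {u : Fin n} (π : Equiv.Perm (Fin n))
    (h : IsAlignment π (π (u + 1)) (π u)) (k l : Fin n) :
    IsAlignment (π * Equiv.swap (u + 1) u) k l ↔
      IsAlignment π k l ∧ ¬(k = π (u + 1) ∧ l = π u) := by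
  obtain ⟨a, rfl⟩ := π.surjective k
  obtain ⟨b, rfl⟩ := π.surjective l
  have hsymm : ∀ x, (π * Equiv.swap (u + 1) u).symm (π x) = Equiv.swap (u + 1) u x := by
    simp [Equiv.Perm.mul_def, Equiv.symm_swap]
  simp only [isAlignment_iff_aligned, hsymm, Equiv.symm_apply_apply, π.injective.eq_iff] at h ⊢
  rcases eq_or_ne a (u + 1) with rfl | ha1
  · rw [Equiv.swap_apply_left]
    rcases eq_or_ne b u with rfl | hb0
    -- the pair `(i, j)` itself, which would now have to lie strictly between `u` and `u + 1`
    · simp [not_aligned_add_one]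
    rcases eq_or_ne b (u + 1) with rfl | hb1
    · simp [not_aligned_self]
    rw [Equiv.swap_apply_of_ne_of_ne hb1 hb0, aligned_add_one_left_iff h.left_ne hb0]
    simp [hb0]
  rcases eq_or_ne u a with rfl | ha0
  · rw [Equiv.swap_apply_right]
    rcases eq_or_ne b u with rfl | hb0
    · simp [not_aligned_self]
    rcases eq_or_ne b (u + 1) with rfl | hb1
    · simp [not_aligned_add_one, h.not_aligned_swap]
    rw [Equiv.swap_apply_of_ne_of_ne hb1 hb0, aligned_add_one_left_iff h.right_ne hb0]
    simp [ha1]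
  rw [Equiv.swap_apply_of_ne_of_ne ha1 ha0.symm]
  simp only [ha1, false_and, not_false_eq_true, and_true]
  rcases eq_or_ne b u with rfl | hb0
  · rw [Equiv.swap_apply_right, aligned_add_one_right_iff ha1.symm h.right_ne]
  rcases eq_or_ne b (u + 1) with rfl | hb1
  · rw [Equiv.swap_apply_left, aligned_add_one_right_iff ha1.symm h.left_ne]
  rw [Equiv.swap_apply_of_ne_of_ne hb1 hb0]

/-- Let `(i, j) = (π(1), π(n))` be a simple alignment of `π` (here `n ≡ 0`),
and let `π'` swap the two images: `π'(1) = j`, `π'(n) = i`. Then the set of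
alignments of `π'` is the set of alignments of `π` with `(i, j)` removed. -/
theorem simple_alignment_swap [NeZero n] (π : Equiv.Perm (Fin n))
    (h : IsAlignment π (π 1) (π 0)) (k l : Fin n) :
    IsAlignment (π * Equiv.swap 1 0) k l ↔
      (IsAlignment π k l ∧ ¬(k = π 1 ∧ l = π 0)) := by
  simpa using isAlignment_mul_swap_iff (u := 0) π (by simpa using h) k l
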